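/- arXiv:1211.6831 — 5 statements merged into one kernel-verified Lean document; each statement's English description precedes it below -/
import Mathlib

section
/- Let x be a right-continuous function with left limits from [0,∞) to ℝ with x(0) ≥ 0. The solution of the one-dimensional Skorohod problem for x is unique: if (z₁,y₁) and (z₂,y₂) both satisfy z(t) = x(t) + y(t) ≥ 0, y(0) = 0, y nondecreasing, and ∫_0^∞ z(t) dy(t) = 0, then z₁ = z₂ and y₁ = y₂. -/
/-!
If `y₂ t < y₁ t`, let `τ` be the last time in `[0, t]` at which `y₁ ≤ y₂`. On `(τ, t]` we have
`z₁ = x + y₁ > x + y₂ = z₂ ≥ 0`, and `dy₁` does not charge `{z₁ > 0}`, so `y₁` is flat there: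
`y₁ t = y₁ τ`. Either `y₁ τ ≤ y₂ τ ≤ y₂ t`, or `z₁ τ > 0`, so that `y₁` has no jump at `τ` and
`y₁ τ` is the limit of values `y₁ s ≤ y₂ s ≤ y₂ t` with `s ↑ τ`. Either way `y₁ t ≤ y₂ t`.
-/

open Set Filter MeasureTheory

/-- A function is RCLL (right continuous with left limits) on `[0, ∞)`. -/
def RCLL (f : ℝ → ℝ) : Prop :=
  (∀ t : ℝ, 0 ≤ t → ContinuousWithinAt f (Set.Ici t) t) ∧
  (∀ t : ℝ, 0 < t → ∃ l : ℝ, Filter.Tendsto f (nhdsWithin t (Set.Iio t)) (nhds l))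

/-- `(z, y)` is a solution of the one-dimensional Skorohod problem for `x`:
`z, y` are nonnegative RCLL functions on `[0,∞)` with `z = x + y ≥ 0`, `y 0 = 0`,
`y` nondecreasing, and `∫_0^∞ z dy = 0` (integral against the Stieltjes measure
associated with `y`, extended by `0` on `(-∞, 0)`). -/
def IsSkorohodSolution (x z y : ℝ → ℝ) : Prop :=
  RCLL z ∧ RCLL y ∧
  (∀ t : ℝ, 0 ≤ t → z t = x t + y t) ∧
  (∀ t : ℝ, 0 ≤ t → 0 ≤ z t) ∧
  (∀ t : ℝ, 0 ≤ t → 0 ≤ y t) ∧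
  y 0 = 0 ∧
  (∀ s t : ℝ, 0 ≤ s → s ≤ t → y s ≤ y t) ∧
  (∀ Y : StieltjesFunction ℝ, (∀ t : ℝ, Y t = if t < 0 then 0 else y t) →
    ∫⁻ t, ENNReal.ofReal (z t) ∂Y.measure = 0)

open Topology

theorem tendsto_ceil_mul_div_nhdsGE (t : ℝ) :
    Tendsto (fun n : ℕ => (⌈t * (n + 1)⌉ : ℝ) / (n + 1)) atTop (𝓝[≥] t) := by
  have hpos (n : ℕ) : (0 : ℝ) < n + 1 := by positivity
  have hge (n : ℕ) : t ≤ (⌈t * (n + 1)⌉ : ℝ) / (n + 1) := by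
    rw [le_div_iff₀ (hpos n)]
    exact Int.le_ceil _
  have hle (n : ℕ) : (⌈t * (n + 1)⌉ : ℝ) / (n + 1) ≤ t + 1 / (n + 1) := by
    rw [div_le_iff₀ (hpos n), add_mul, one_div_mul_cancel (hpos n).ne']
    exact (Int.ceil_lt_add_one _).le
  have hupper : Tendsto (fun n : ℕ => t + 1 / ((n : ℝ) + 1)) atTop (𝓝 t) := by
    simpa using
      (tendsto_const_nhds (x := t)).add (tendsto_one_div_add_atTop_nhds_zero_nat (𝕜 := ℝ))
  exact tendsto_nhdsWithin_of_tendsto_nhds_of_eventually_within _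
    (tendsto_of_tendsto_of_tendsto_of_le_of_le tendsto_const_nhds hupper hge hle)
    (Eventually.of_forall hge)

theorem measurable_of_continuousWithinAt_Ici {β : Type*} [TopologicalSpace β]
    [TopologicalSpace.PseudoMetrizableSpace β] [MeasurableSpace β] [BorelSpace β] {f : ℝ → β}
    (hf : ∀ t, ContinuousWithinAt f (Ici t) t) : Measurable f := by
  refine measurable_of_tendsto_metrizable
    (f := fun (n : ℕ) (t : ℝ) => f ((⌈t * (n + 1)⌉ : ℝ) / (n + 1))) (fun n => ?_) ?_
  · exact (measurable_from_top (f := fun k : ℤ => f (k / ((n : ℝ) + 1)))).comp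
      (Int.measurable_ceil.comp (measurable_id.mul_const _))
  · exact tendsto_pi_nhds.2 fun t => (hf t).tendsto.comp (tendsto_ceil_mul_div_nhdsGE t)

theorem continuousWithinAt_comp_max_Ici {β : Type*} [TopologicalSpace β] {f : ℝ → β} {a : ℝ}
    (hf : ∀ t, a ≤ t → ContinuousWithinAt f (Ici t) t) (t : ℝ) :
    ContinuousWithinAt (fun s => f (max s a)) (Ici t) t :=
  (hf _ (le_max_right t a)).comp (f := fun s => max s a)
    (continuous_id.max continuous_const).continuousWithinAt fun _ hs => max_le_max_right a hs

namespace IsSkorohodSolution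

variable {x z y : ℝ → ℝ}

theorem z_eq (h : IsSkorohodSolution x z y) {t : ℝ} (ht : 0 ≤ t) : z t = x t + y t :=
  h.2.2.1 t ht

theorem z_nonneg (h : IsSkorohodSolution x z y) {t : ℝ} (ht : 0 ≤ t) : 0 ≤ z t :=
  h.2.2.2.1 t ht

theorem y_zero (h : IsSkorohodSolution x z y) : y 0 = 0 :=
  h.2.2.2.2.2.1

theorem monotoneOn (h : IsSkorohodSolution x z y) : MonotoneOn y (Ici 0) :=
  fun _ hs _ _ hst => h.2.2.2.2.2.2.1 _ _ hs hst

/-- Since `y 0 = 0`, this is the function `Y` of `IsSkorohodSolution`; the `max` form makes it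
monotone and right-continuous at once. -/
noncomputable def stieltjes (h : IsSkorohodSolution x z y) : StieltjesFunction ℝ where
  toFun t := y (max t 0)
  mono' _ _ hst := h.monotoneOn (mem_Ici.2 (le_max_right _ _)) (mem_Ici.2 (le_max_right _ _))
    (max_le_max_right 0 hst)
  right_continuous' := continuousWithinAt_comp_max_Ici h.2.1.1

theorem stieltjes_apply (h : IsSkorohodSolution x z y) (t : ℝ) : h.stieltjes t = y (max t 0) :=
  rfl

theorem stieltjes_of_nonneg (h : IsSkorohodSolution x z y) {t : ℝ} (ht : 0 ≤ t) :
    h.stieltjes t = y t := by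
  rw [stieltjes_apply, max_eq_left ht]

theorem measure_Iic_zero (h : IsSkorohodSolution x z y) : h.stieltjes.measure (Iic 0) = 0 := by
  have hbot : Tendsto h.stieltjes atBot (𝓝 (y 0)) := by
    refine tendsto_const_nhds.congr' ?_
    filter_upwards [eventually_le_atBot 0] with s hs
    rw [stieltjes_apply, max_eq_right hs]
  rw [h.stieltjes.measure_Iic hbot, stieltjes_of_nonneg h le_rfl, sub_self, ENNReal.ofReal_zero]

theorem measure_setOf_pos_eq_zero (h : IsSkorohodSolution x z y) :
    h.stieltjes.measure {s | 0 < z (max s 0)} = 0 := by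
  have hY (t : ℝ) : h.stieltjes t = if t < 0 then 0 else y t := by
    rcases lt_or_ge t 0 with ht | ht
    · rw [if_pos ht, stieltjes_apply, max_eq_right ht.le, h.y_zero]
    · rw [if_neg ht.not_gt, stieltjes_of_nonneg h ht]
  have hae : (fun s => ENNReal.ofReal (z s)) =ᵐ[h.stieltjes.measure]
      fun s => ENNReal.ofReal (z (max s 0)) := by
    filter_upwards [measure_eq_zero_iff_ae_notMem.1 h.measure_Iic_zero] with s hs
    rw [max_eq_left (not_le.mp hs).le]
  have hmeas : Measurable fun s => ENNReal.ofReal (z (max s 0)) :=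
    ENNReal.measurable_ofReal.comp
      (measurable_of_continuousWithinAt_Ici (continuousWithinAt_comp_max_Ici h.1.1))
  have hzero := (lintegral_eq_zero_iff hmeas).mp ((lintegral_congr_ae hae).symm.trans
    (h.2.2.2.2.2.2.2 _ hY))
  simpa [EventuallyEq, ae_iff, ENNReal.ofReal_eq_zero] using hzero

theorem y_le_of_z_pos_on_Ioc (h : IsSkorohodSolution x z y) {a b : ℝ} (ha : 0 ≤ a) (hb : 0 ≤ b)
    (hz : ∀ s ∈ Ioc a b, 0 < z s) : y b ≤ y a := by
  have hnull : h.stieltjes.measure (Ioc a b) = 0 :=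
    measure_mono_null (fun s hs => by
      show 0 < z (max s 0); rw [max_eq_left (ha.trans hs.1.le)]; exact hz s hs)
      h.measure_setOf_pos_eq_zero
  rw [h.stieltjes.measure_Ioc, ENNReal.ofReal_eq_zero, stieltjes_of_nonneg h ha,
    stieltjes_of_nonneg h hb, sub_nonpos] at hnull
  exact hnull

/-- `y` has no jump at a time where `z > 0`. -/
theorem y_le_of_z_pos_of_forall_lt (h : IsSkorohodSolution x z y) {a c : ℝ} (ha : 0 < a)
    (hz : 0 < z a) (hc : ∀ s ∈ Ico 0 a, y s ≤ c) : y a ≤ c := by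
  have hnull : h.stieltjes.measure {a} = 0 :=
    measure_mono_null (fun s hs => by
      rw [mem_singleton_iff.mp hs]; show 0 < z (max a 0); rw [max_eq_left ha.le]; exact hz)
      h.measure_setOf_pos_eq_zero
  rw [h.stieltjes.measure_singleton, ENNReal.ofReal_eq_zero, sub_nonpos,
    stieltjes_of_nonneg h ha.le] at hnull
  refine hnull.trans (le_of_tendsto (h.stieltjes.mono.tendsto_leftLim a) ?_)
  exact eventually_nhdsWithin_of_forall fun s hs =>
    (h.stieltjes_apply s).trans_le (hc _ ⟨le_max_right s 0, max_lt hs ha⟩)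

variable {z₁ y₁ z₂ y₂ : ℝ → ℝ}

theorem z_pos_of_y_lt (h₁ : IsSkorohodSolution x z₁ y₁) (h₂ : IsSkorohodSolution x z₂ y₂)
    {s : ℝ} (hs : 0 ≤ s) (hlt : y₂ s < y₁ s) : 0 < z₁ s := by
  linarith [h₁.z_eq hs, h₂.z_eq hs, h₂.z_nonneg hs]

theorem y_le (h₁ : IsSkorohodSolution x z₁ y₁) (h₂ : IsSkorohodSolution x z₂ y₂)
    {t : ℝ} (ht : 0 ≤ t) : y₁ t ≤ y₂ t := by
  by_contra hlt
  set S := {s ∈ Icc 0 t | y₁ s ≤ y₂ s}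
  have h0S : 0 ∈ S := ⟨⟨le_rfl, ht⟩, by rw [h₁.y_zero, h₂.y_zero]⟩
  have hbdd : BddAbove S := ⟨t, fun s hs => hs.1.2⟩
  set τ := sSup S
  have hτ0 : 0 ≤ τ := le_csSup hbdd h0S
  have hτt : τ ≤ t := csSup_le ⟨0, h0S⟩ fun s hs => hs.1.2
  have hgap : ∀ s ∈ Ioc τ t, y₂ s < y₁ s := fun s hs => not_le.mp fun hle =>
    (le_csSup hbdd ⟨⟨hτ0.trans hs.1.le, hs.2⟩, hle⟩).not_gt hs.1
  have hflat : y₁ t ≤ y₁ τ := h₁.y_le_of_z_pos_on_Ioc hτ0 ht fun s hs =>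
    z_pos_of_y_lt h₁ h₂ (hτ0.trans hs.1.le) (hgap s hs)
  have hτ : y₁ τ ≤ y₂ t := by
    by_cases hτS : y₁ τ ≤ y₂ τ
    · exact hτS.trans (h₂.monotoneOn hτ0 ht hτt)
    have hτpos : 0 < τ := hτ0.lt_of_ne fun h => hτS (h ▸ h0S.2)
    refine h₁.y_le_of_z_pos_of_forall_lt hτpos (z_pos_of_y_lt h₁ h₂ hτ0 (not_le.mp hτS)) fun s hs => ?_
    obtain ⟨s', hs'S, hss'⟩ := exists_lt_of_lt_csSup ⟨0, h0S⟩ hs.2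
    calc y₁ s ≤ y₁ s' := h₁.monotoneOn hs.1 hs'S.1.1 hss'.le
      _ ≤ y₂ s' := hs'S.2
      _ ≤ y₂ t := h₂.monotoneOn hs'S.1.1 ht hs'S.1.2
  exact hlt (hflat.trans hτ)

end IsSkorohodSolution

theorem skorohod_problem_uniqueness_general
    (x : ℝ → ℝ)
    (z₁ y₁ z₂ y₂ : ℝ → ℝ)
    (h₁ : IsSkorohodSolution x z₁ y₁)
    (h₂ : IsSkorohodSolution x z₂ y₂) :
    ∀ t : ℝ, 0 ≤ t → z₁ t = z₂ t ∧ y₁ t = y₂ t := by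
  intro t ht
  have hy : y₁ t = y₂ t := le_antisymm (h₁.y_le h₂ ht) (h₂.y_le h₁ ht)
  exact ⟨by rw [h₁.z_eq ht, h₂.z_eq ht, hy], hy⟩

/-- **Uniqueness for the 1-dimensional Skorohod problem.** -/
theorem skorohod_problem_uniqueness
    (x : ℝ → ℝ) (hx : RCLL x) (hx0 : 0 ≤ x 0)
    (z₁ y₁ z₂ y₂ : ℝ → ℝ)
    (h₁ : IsSkorohodSolution x z₁ y₁)
    (h₂ : IsSkorohodSolution x z₂ y₂) :
    ∀ t : ℝ, 0 ≤ t → z₁ t = z₂ t ∧ y₁ t = y₂ t :=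
  skorohod_problem_uniqueness_general x z₁ y₁ z₂ y₂ h₁ h₂
end

section
/- Let x be an RCLL function from [0,∞) to ℝ with x(0) ≥ 0, and let (z,y) be a pair of RCLL functions such that z(t) = x(t) + y(t) ≥ 0 for all t ≥ 0, and y is nondecreasing with y(0) = 0. Then z(t) ≥ Γ(x)(t) = x(t) - inf_{0≤s≤t} x(s) for all t ≥ 0. -/
open Set Filter

/-- The one-dimensional Skorohod map `Γ(x)(t) = x(t) - inf_{0≤s≤t} x(s)`. -/
noncomputable def skorohodMap (x : ℝ → ℝ) (t : ℝ) : ℝ :=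
  x t - sInf (x '' Set.Icc 0 t)

theorem neg_le_sInf_image_Icc {x y : ℝ → ℝ} {t : ℝ} (ht : 0 ≤ t)
    (hsum : ∀ s ∈ Icc 0 t, 0 ≤ x s + y s) (hy : ∀ s ∈ Icc 0 t, y s ≤ y t) :
    -y t ≤ sInf (x '' Icc 0 t) := by
  refine le_csInf ((nonempty_Icc.2 ht).image x) ?_
  rintro _ ⟨s, hs, rfl⟩
  linarith [hsum s hs, hy s hs]

theorem skorohodMap_minimality_general
    (x z y : ℝ → ℝ)
    (hzx : ∀ t : ℝ, 0 ≤ t → z t = x t + y t)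
    (hznn : ∀ t : ℝ, 0 ≤ t → 0 ≤ z t)
    (hymono : ∀ s t : ℝ, 0 ≤ s → s ≤ t → y s ≤ y t) :
    ∀ t : ℝ, 0 ≤ t → skorohodMap x t ≤ z t := by
  intro t ht
  have hinf : -y t ≤ sInf (x '' Icc 0 t) :=
    neg_le_sInf_image_Icc ht (fun s hs => hzx s hs.1 ▸ hznn s hs.1)
      (fun s hs => hymono s t hs.1 hs.2)
  rw [skorohodMap, hzx t ht]
  linarith

/-- **Minimality of the Skorohod map.** If `z = x + y ≥ 0` on `[0,∞)` with `y`
nondecreasing and `y 0 = 0`, then `z t ≥ Γ(x)(t)` for all `t ≥ 0`. -/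
theorem skorohodMap_minimality
    (x z y : ℝ → ℝ) (hx : RCLL x) (hz : RCLL z) (hy : RCLL y)
    (hx0 : 0 ≤ x 0)
    (hzx : ∀ t : ℝ, 0 ≤ t → z t = x t + y t)
    (hznn : ∀ t : ℝ, 0 ≤ t → 0 ≤ z t)
    (hy0 : y 0 = 0)
    (hymono : ∀ s t : ℝ, 0 ≤ s → s ≤ t → y s ≤ y t) :
    ∀ t : ℝ, 0 ≤ t → skorohodMap x t ≤ z t :=
  skorohodMap_minimality_general x z y hzx hznn hymono
end

section
/- Let X be a K-dimensional Brownian motion with drift ϑ and covariance Σ, μ* ∈ ℝ^K positive, c ∈ ℝ^K positive, and assume c_K μ*_K = min_i c_i μ*_i. Define W*(t) = Σ_i X_i(t)/μ*_i - inf_{0≤s≤t} Σ_i X_i(s)/μ*_i, Q*_K(t) = μ*_K W*(t), Q*_j = 0 for j < K, and correspondingly η*_K(t) = W*(t) - X_K(t)/μ*_K, η*_j(t) = -X_j(t)/μ*_j for j < K. Then η* solves the Brownian control problem: for every admissible η̃ (i.e., Q̃_i(t) = X_i(t) + μ*_i η̃_i(t) ≥ 0 and Σ_i η̃_i nondecreasing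 from 0), one has E[∫_0^∞ e^{-γt} c·Q̃(t) dt] ≥ E[∫_0^∞ e^{-γt} c·Q*(t) dt], for any γ > 0. -/
/-!
Pathwise argument. For an admissible control, `∑ᵢ Xᵢ/μ*ᵢ + Ĩ = ∑ᵢ Q̃ᵢ/μ*ᵢ ≥ 0` with `Ĩ`
nondecreasing, so `Ĩ(t)` dominates `sup_{s ≤ t} (-∑ᵢ Xᵢ(s)/μ*ᵢ)`: the reflected workload `W*`
is the smallest workload any admissible control can achieve. Since `c_K μ*_K ≤ cᵢ μ*ᵢ`,
`c·Q̃(t) ≥ c_K μ*_K ∑ᵢ Q̃ᵢ(t)/μ*ᵢ ≥ c_K μ*_K W*(t)` at every time and on every path, and the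
discounted expected costs compare by monotonicity of the integrals.
-/

open Set Filter MeasureTheory ProbabilityTheory

/-- `X` is a `K`-dimensional Brownian motion with drift `ϑ` and covariance matrix `S`:
it starts at `0`, has continuous paths, independent increments, and every linear
functional of an increment over `[s,t]` is Gaussian with mean `a·ϑ (t-s)` and
variance `(aᵀ S a)(t-s)`. -/
def IsBrownianDriftCov {Ω : Type*} [MeasurableSpace Ω] (μ : Measure Ω) {K : ℕ}
    (X : ℝ → Ω → Fin K → ℝ) (ϑ : Fin K → ℝ) (S : Matrix (Fin K) (Fin K) ℝ) : Prop :=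
  (∀ᵐ ω ∂μ, X 0 ω = 0 ∧ Continuous fun t : ℝ => X t ω) ∧
  (∀ (m : ℕ) (t : Fin (m + 1) → ℝ), Monotone t → (∀ i, 0 ≤ t i) →
    ProbabilityTheory.iIndepFun
      (fun (i : Fin m) (ω : Ω) => fun k => X (t i.succ) ω k - X (t i.castSucc) ω k) μ) ∧
  (∀ s t : ℝ, 0 ≤ s → s ≤ t → ∀ a : Fin K → ℝ,
    Measure.map (fun ω => ∑ i, a i * (X t ω i - X s ω i)) μ =
      ProbabilityTheory.gaussianReal ((∑ i, a i * ϑ i) * (t - s))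
        (Real.toNNReal ((t - s) * ∑ i, ∑ j, a i * S i j * a j)))

theorem sub_sInf_image_Icc_le_add {f g : ℝ → ℝ} {a t : ℝ} (hat : a ≤ t)
    (hg : MonotoneOn g (Icc a t)) (hfg : ∀ s ∈ Icc a t, 0 ≤ f s + g s) :
    f t - sInf (f '' Icc a t) ≤ f t + g t := by
  have hmem : t ∈ Icc a t := right_mem_Icc.2 hat
  have : -g t ≤ sInf (f '' Icc a t) :=
    le_csInf ((nonempty_Icc.2 hat).image f) <| forall_mem_image.2 fun s hs => by
      linarith [hfg s hs, hg hs hmem hs.2]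
  linarith

section Fintype

variable {ι : Type*} [Fintype ι]

theorem sum_div_add_sum_eq_sum_add_mul_div {x y μ : ι → ℝ} (hμ : ∀ i, μ i ≠ 0) :
    ∑ i, x i / μ i + ∑ i, y i = ∑ i, (x i + μ i * y i) / μ i := by
  rw [← Finset.sum_add_distrib]
  refine Finset.sum_congr rfl fun i _ => ?_
  field_simp [hμ i]

theorem mul_sum_div_le_sum_mul {A : ℝ} {c μ q : ι → ℝ} (hμ : ∀ i, 0 < μ i)
    (hq : ∀ i, 0 ≤ q i) (hA : ∀ i, A ≤ c i * μ i) :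
    A * ∑ i, q i / μ i ≤ ∑ i, c i * q i := by
  rw [Finset.mul_sum]
  refine Finset.sum_le_sum fun i _ => ?_
  calc A * (q i / μ i) ≤ c i * μ i * (q i / μ i) :=
        mul_le_mul_of_nonneg_right (hA i) (div_nonneg (hq i) (hμ i).le)
    _ = c i * q i := by field_simp [(hμ i).ne']

theorem mul_reflected_workload_le_cost {x y : ℝ → ι → ℝ} {μ c : ι → ℝ} {A t : ℝ}
    (hμ : ∀ i, 0 < μ i) (hA₀ : 0 ≤ A) (hA : ∀ i, A ≤ c i * μ i) (ht : 0 ≤ t)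
    (hq : ∀ i s, 0 ≤ s → 0 ≤ x s i + μ i * y s i)
    (hy : ∀ s t, 0 ≤ s → s ≤ t → ∑ i, y s i ≤ ∑ i, y t i) :
    A * (∑ i, x t i / μ i - sInf ((fun s => ∑ i, x s i / μ i) '' Icc 0 t)) ≤
      ∑ i, c i * (x t i + μ i * y t i) := by
  have hsum (s : ℝ) : ∑ i, x s i / μ i + ∑ i, y s i = ∑ i, (x s i + μ i * y s i) / μ i :=
    sum_div_add_sum_eq_sum_add_mul_div fun i => (hμ i).ne'
  have hworkload :
      ∑ i, x t i / μ i - sInf ((fun s => ∑ i, x s i / μ i) '' Icc 0 t) ≤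
        ∑ i, x t i / μ i + ∑ i, y t i :=
    sub_sInf_image_Icc_le_add (g := fun s => ∑ i, y s i) ht
      (fun s hs r hr hsr => hy s r hs.1 hsr)
      (fun s hs => (hsum s).symm ▸
        Finset.sum_nonneg fun i _ => div_nonneg (hq i s hs.1) (hμ i).le)
  calc _ ≤ A * (∑ i, x t i / μ i + ∑ i, y t i) := mul_le_mul_of_nonneg_left hworkload hA₀
    _ = A * ∑ i, (x t i + μ i * y t i) / μ i := by rw [hsum]
    _ ≤ _ := mul_sum_div_le_sum_mul hμ (fun i => hq i t ht) hA

end Fintype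

theorem bcp_cmu_optimality_general
    {Ω : Type*} {m0 : MeasurableSpace Ω} (μ : Measure Ω)
    (K : ℕ)
    (X : ℝ → Ω → Fin (K + 1) → ℝ)
    (μstar c : Fin (K + 1) → ℝ)
    (hμstar : ∀ i, 0 < μstar i) (hc : ∀ i, 0 < c i)
    (hmin : ∀ i, c (Fin.last K) * μstar (Fin.last K) ≤ c i * μstar i)
    (γ : ℝ)
    (η : ℝ → Ω → Fin (K + 1) → ℝ)
    (hQnn : ∀ᵐ ω ∂μ, ∀ (i : Fin (K + 1)) (t : ℝ), 0 ≤ t →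
      0 ≤ X t ω i + μstar i * η t ω i)
    (hImono : ∀ᵐ ω ∂μ, ∀ s t : ℝ, 0 ≤ s → s ≤ t →
      (∑ i, η s ω i) ≤ (∑ i, η t ω i)) :
    (∫⁻ ω, (∫⁻ t in Set.Ioi (0:ℝ),
        ENNReal.ofReal (Real.exp (-γ * t) *
          (c (Fin.last K) * μstar (Fin.last K) *
            ((∑ i, X t ω i / μstar i) -
              sInf ((fun s : ℝ => ∑ i, X s ω i / μstar i) '' Set.Icc 0 t))))) ∂μ)
      ≤ ∫⁻ ω, (∫⁻ t in Set.Ioi (0:ℝ),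
          ENNReal.ofReal (Real.exp (-γ * t) *
            (∑ i, c i * (X t ω i + μstar i * η t ω i)))) ∂μ := by
  have hA₀ : 0 ≤ c (Fin.last K) * μstar (Fin.last K) := (mul_pos (hc _) (hμstar _)).le
  refine lintegral_mono_ae ?_
  filter_upwards [hQnn, hImono] with ω hQ hI
  refine setLIntegral_mono' measurableSet_Ioi fun t ht => ?_
  exact ENNReal.ofReal_le_ofReal <| mul_le_mul_of_nonneg_left
    (mul_reflected_workload_le_cost (x := fun s => X s ω) (y := fun s => η s ω)
      hμstar hA₀ hmin (le_of_lt ht) (fun i s hs => hQ i s hs) hI)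
    (Real.exp_pos _).le

/-- **Optimality of `η*` for the Brownian control problem.**
With `c_K μ*_K = min_i c_i μ*_i` (index `Fin.last K`), the control putting the whole
workload `W*` in the cheapest class satisfies: for every admissible `η̃`,
`E[∫_0^∞ e^{-γt} c·Q̃(t) dt] ≥ E[∫_0^∞ e^{-γt} c_K μ*_K W*(t) dt]`, where
`Q̃_i = X_i + μ*_i η̃_i`, `W*(t) = Σ_i X_i(t)/μ*_i - inf_{0≤s≤t} Σ_i X_i(s)/μ*_i`,
and the right side is the cost `E[∫_0^∞ e^{-γt} c·Q*(t) dt]` of the optimal state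
`Q*_K = μ*_K W*`, `Q*_j = 0` for `j < K`. -/
theorem bcp_cmu_optimality
    {Ω : Type*} {m0 : MeasurableSpace Ω} (μ : Measure Ω) [IsProbabilityMeasure μ]
    (ℱ : MeasureTheory.Filtration ℝ m0)
    (K : ℕ)
    (X : ℝ → Ω → Fin (K + 1) → ℝ) (ϑ : Fin (K + 1) → ℝ)
    (S : Matrix (Fin (K + 1)) (Fin (K + 1)) ℝ)
    (hX : IsBrownianDriftCov μ X ϑ S)
    (μstar c : Fin (K + 1) → ℝ)
    (hμstar : ∀ i, 0 < μstar i) (hc : ∀ i, 0 < c i)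
    (hmin : ∀ i, c (Fin.last K) * μstar (Fin.last K) ≤ c i * μstar i)
    (γ : ℝ) (hγ : 0 < γ)
    (η : ℝ → Ω → Fin (K + 1) → ℝ)
    (hη_adapted : ∀ t : ℝ, StronglyMeasurable[ℱ t] (η t))
    (hη_rcll : ∀ᵐ ω ∂μ, ∀ (i : Fin (K + 1)) (t : ℝ), 0 ≤ t →
      ContinuousWithinAt (fun s : ℝ => η s ω i) (Set.Ici t) t ∧
      (0 < t → ∃ l : ℝ, Filter.Tendsto (fun s : ℝ => η s ω i)
        (nhdsWithin t (Set.Iio t)) (nhds l)))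
    (hQnn : ∀ᵐ ω ∂μ, ∀ (i : Fin (K + 1)) (t : ℝ), 0 ≤ t →
      0 ≤ X t ω i + μstar i * η t ω i)
    (hI0 : ∀ᵐ ω ∂μ, (∑ i, η 0 ω i) = 0)
    (hImono : ∀ᵐ ω ∂μ, ∀ s t : ℝ, 0 ≤ s → s ≤ t →
      (∑ i, η s ω i) ≤ (∑ i, η t ω i)) :
    (∫⁻ ω, (∫⁻ t in Set.Ioi (0:ℝ),
        ENNReal.ofReal (Real.exp (-γ * t) *
          (c (Fin.last K) * μstar (Fin.last K) *
            ((∑ i, X t ω i / μstar i) -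
              sInf ((fun s : ℝ => ∑ i, X s ω i / μstar i) '' Set.Icc 0 t))))) ∂μ)
      ≤ ∫⁻ ω, (∫⁻ t in Set.Ioi (0:ℝ),
          ENNReal.ofReal (Real.exp (-γ * t) *
            (∑ i, c i * (X t ω i + μstar i * η t ω i)))) ∂μ :=
  bcp_cmu_optimality_general (m0 := m0) μ K X μstar c hμstar hc hmin γ η hQnn hImono
end

section
/- Let W : [0,∞) → [0,∞), Ĩ : [0,∞) → [0,∞) and ξ : [0,∞) → ℝ be functions with W(t) = ξ(t) + θ t + ζ(t) where θ < 0 and ζ is nondecreasing, ζ(0) = 0, and ζ increases only when W = 0, with W(0) = 0 and W right-continuous with left limits. Define τ(t) = sup{0 ≤ s ≤ t : W(s) = 0}. Then for all t ≥ 0: W(t) = ξ(t) - ξ(τ(t)-) + θ(t - τ(t)), and consequently 0 ≤ -θ (t - τ(t)) ≤ ξ(t) - ξ(τ(t)-). -/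
/-!
On the excursion `(τ(t), t]` the workload `W` is strictly positive, so the regulator `ζ` is flat
there and, being continuous, `ζ(t) = ζ(τ(t))`. Taking left limits at `τ(t)` in
`W = ξ + θ·s + ζ` and using `W(τ(t)-) = 0` gives `ξ(τ(t)-) + θ τ(t) + ζ(τ(t)) = 0`; subtracting
this from the decomposition at `t` yields the identity, and `W(t) ≥ 0` the inequalities.
-/

open Set Filter

open Topology

/-- `τ(t)` of the paper; it is `0` when `W` has no zero in `[0, t]`, since `sSup ∅ = 0` in `ℝ`. -/
noncomputable def lastZero (W : ℝ → ℝ) (t : ℝ) : ℝ :=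
  sSup {s : ℝ | 0 ≤ s ∧ s ≤ t ∧ W s = 0}

section LastZero

variable {W : ℝ → ℝ} {t : ℝ}

lemma lastZero_nonneg : 0 ≤ lastZero W t :=
  Real.sSup_nonneg fun _ hs => hs.1

lemma lastZero_le (ht : 0 ≤ t) : lastZero W t ≤ t :=
  Real.sSup_le (fun _ hs => hs.2.1) ht

lemma pos_of_lastZero_lt (hWnn : ∀ s, 0 ≤ s → 0 ≤ W s) {s : ℝ}
    (hs : lastZero W t < s) (hst : s ≤ t) : 0 < W s := by
  have hs0 : 0 ≤ s := lastZero_nonneg.trans hs.le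
  refine (hWnn s hs0).lt_of_ne fun hzero => hs.not_ge ?_
  exact le_csSup ⟨t, fun _ hu => hu.2.1⟩ ⟨hs0, hst, hzero.symm⟩

end LastZero

lemma eq_of_eqOn_Ioc_of_continuousWithinAt {f : ℝ → ℝ} {a b : ℝ} (hab : a ≤ b)
    (hf : ContinuousWithinAt f (Ioi a) a) (hflat : ∀ s ∈ Ioc a b, f s = f b) :
    f a = f b := by
  rcases hab.eq_or_lt with rfl | hlt
  · rfl
  have hconst : f =ᶠ[𝓝[>] a] fun _ => f b :=
    eventually_of_mem (Ioc_mem_nhdsGT hlt) hflat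
  exact tendsto_nhds_unique hf (tendsto_const_nhds.congr' hconst.symm)

section Decomposition

variable {W ξ ζ : ℝ → ℝ} {θ : ℝ}

lemma tendsto_nhdsLT_of_decomposition (hWe : ∀ s, 0 ≤ s → W s = ξ s + θ * s + ζ s)
    (hζ : Continuous ζ) {a l : ℝ} (ha : 0 < a) (hl : Tendsto ξ (𝓝[<] a) (𝓝 l)) :
    Tendsto W (𝓝[<] a) (𝓝 (l + θ * a + ζ a)) := by
  have hlin : Tendsto (fun s => ξ s + θ * s + ζ s) (𝓝[<] a) (𝓝 (l + θ * a + ζ a)) :=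
    (hl.add (tendsto_nhdsWithin_of_tendsto_nhds (continuous_const_mul θ).continuousAt)).add
      (tendsto_nhdsWithin_of_tendsto_nhds hζ.continuousAt)
  refine hlin.congr' ?_
  filter_upwards [eventually_nhdsWithin_of_eventually_nhds (eventually_gt_nhds ha)] with s hs
  exact (hWe s hs.le).symm

/-- At `a = 0` the left limit of `ξ` only sees its constant extension to `(-∞, 0]`. -/
lemma leftLimit_add_eq_zero (hWe : ∀ s, 0 ≤ s → W s = ξ s + θ * s + ζ s)
    (hW0 : W 0 = 0) (hξext : ∀ s, s ≤ 0 → ξ s = ξ 0) (hζ0 : ζ 0 = 0) (hζ : Continuous ζ)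
    {a l : ℝ} (ha : 0 ≤ a) (hW : Tendsto W (𝓝[<] a) (𝓝 0))
    (hl : Tendsto ξ (𝓝[<] a) (𝓝 l)) :
    l + θ * a + ζ a = 0 := by
  rcases ha.eq_or_lt with rfl | hpos
  · have hξ0 : ξ 0 = 0 := by linarith [hWe 0 le_rfl]
    have hconst : ξ =ᶠ[𝓝[<] 0] fun _ => ξ 0 :=
      eventually_nhdsWithin_of_forall fun s hs => hξext s (le_of_lt hs)
    have hl0 : l = ξ 0 := tendsto_nhds_unique hl (tendsto_const_nhds.congr' hconst.symm)
    simp [hl0, hξ0, hζ0]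
  · exact tendsto_nhds_unique (tendsto_nhdsLT_of_decomposition hWe hζ hpos hl) hW

end Decomposition

theorem state_space_collapse_identity_general
    (W ξ ζ : ℝ → ℝ) (θ : ℝ) (hθ : θ < 0)
    (hWe : ∀ t : ℝ, 0 ≤ t → W t = ξ t + θ * t + ζ t)
    (hW0 : W 0 = 0)
    (hWnn : ∀ t : ℝ, 0 ≤ t → 0 ≤ W t)
    (hξext : ∀ s : ℝ, s ≤ 0 → ξ s = ξ 0)
    (hζ0 : ζ 0 = 0)
    (hζcont : Continuous ζ)
    (hζflat : ∀ s t : ℝ, 0 ≤ s → s ≤ t → (∀ u ∈ Set.Icc s t, 0 < W u) → ζ t = ζ s)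
    (τ : ℝ → ℝ) (hτ : ∀ t : ℝ, τ t = sSup {s : ℝ | 0 ≤ s ∧ s ≤ t ∧ W s = 0})
    (hWleft : ∀ t : ℝ, 0 ≤ t →
      Filter.Tendsto W (nhdsWithin (τ t) (Set.Iio (τ t))) (nhds 0)) :
    ∀ t : ℝ, 0 ≤ t → ∀ l : ℝ,
      Filter.Tendsto ξ (nhdsWithin (τ t) (Set.Iio (τ t))) (nhds l) →
        W t = ξ t - l + θ * (t - τ t) ∧
        0 ≤ -θ * (t - τ t) ∧
        -θ * (t - τ t) ≤ ξ t - l := by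
  intro t ht l hl
  have hτz : τ t = lastZero W t := hτ t
  have hτ0 : 0 ≤ τ t := hτz ▸ lastZero_nonneg
  have hτt : τ t ≤ t := hτz ▸ lastZero_le ht
  have hζτ : ζ (τ t) = ζ t :=
    eq_of_eqOn_Ioc_of_continuousWithinAt hτt hζcont.continuousWithinAt fun s hs =>
      (hζflat s t (hτ0.trans hs.1.le) hs.2 fun u hu =>
        pos_of_lastZero_lt hWnn (hτz ▸ hs.1.trans_le hu.1) hu.2).symm
  have hbalance : l + θ * τ t + ζ (τ t) = 0 :=
    leftLimit_add_eq_zero hWe hW0 hξext hζ0 hζcont hτ0 (hWleft t ht) hl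
  have hWt : W t = ξ t - l + θ * (t - τ t) := by linarith [hWe t ht]
  refine ⟨hWt, ?_, by linarith [hWnn t ht]⟩
  nlinarith

/-- **Pathwise identity for state-space collapse.**
Suppose `W = ξ + θ·t + ζ ≥ 0` on `[0,∞)` with `θ < 0`, `W(0) = 0`, `ζ` continuous
nondecreasing with `ζ(0) = 0` increasing only when `W = 0`, `W, ξ` RCLL (extended
constantly to `(-∞,0]`), and `W(τ(t)-) = 0` where
`τ(t) = sup {0 ≤ s ≤ t : W(s) = 0}`. Then for every `t ≥ 0`,
`W(t) = ξ(t) - ξ(τ(t)-) + θ (t - τ(t))` and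
`0 ≤ -θ (t - τ(t)) ≤ ξ(t) - ξ(τ(t)-)`. -/
theorem state_space_collapse_identity
    (W ξ ζ : ℝ → ℝ) (θ : ℝ) (hθ : θ < 0)
    (hWe : ∀ t : ℝ, 0 ≤ t → W t = ξ t + θ * t + ζ t)
    (hW0 : W 0 = 0)
    (hWnn : ∀ t : ℝ, 0 ≤ t → 0 ≤ W t)
    (hWext : ∀ s : ℝ, s ≤ 0 → W s = 0)
    (hξext : ∀ s : ℝ, s ≤ 0 → ξ s = ξ 0)
    (hζ0 : ζ 0 = 0)
    (hζcont : Continuous ζ)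
    (hζmono : ∀ s t : ℝ, 0 ≤ s → s ≤ t → ζ s ≤ ζ t)
    (hζflat : ∀ s t : ℝ, 0 ≤ s → s ≤ t → (∀ u ∈ Set.Icc s t, 0 < W u) → ζ t = ζ s)
    (hWrcll : RCLL W) (hξrcll : RCLL ξ)
    (τ : ℝ → ℝ) (hτ : ∀ t : ℝ, τ t = sSup {s : ℝ | 0 ≤ s ∧ s ≤ t ∧ W s = 0})
    (hWleft : ∀ t : ℝ, 0 ≤ t →
      Filter.Tendsto W (nhdsWithin (τ t) (Set.Iio (τ t))) (nhds 0)) :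
    ∀ t : ℝ, 0 ≤ t → ∀ l : ℝ,
      Filter.Tendsto ξ (nhdsWithin (τ t) (Set.Iio (τ t))) (nhds l) →
        W t = ξ t - l + θ * (t - τ t) ∧
        0 ≤ -θ * (t - τ t) ∧
        -θ * (t - τ t) ≤ ξ t - l :=
  state_space_collapse_identity_general W ξ ζ θ hθ hWe hW0 hWnn hξext hζ0 hζcont hζflat τ hτ hWleft
end

section
/- Let Γ be the one-dimensional Skorohod map Γ(x)(t) = x(t) - inf_{0≤s≤t} x(s), and let x̃ and φ be RCLL functions with x̃(0) + φ(0) ≥ 0. Suppose W(t) = x̃(t) - φ(t) + I(t) ≥ 0 where I(t) = -inf_{0≤s≤t}(x̃(s) - φ(s)). Define W̃(t) = W(t) + φ(t) + inf_{0≤s≤t}(-φ(s)). Then for all t ≥ 0: x̃(t) - sup_{0≤s≤t}|x̃(s)| ≤ W̃(t) ≤ Γ(x̃)(t). -/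
/-!
The infima and suprema over `[0, t]` are finite because an RCLL function is locally bounded on
`[0, ∞)` (on the left of `t > 0` by its left limit, on the right by right continuity), hence bounded
on the compact interval `[0, t]`. Writing `W̃ = x̃ - inf (x̃ - φ) + inf (-φ)`, the sandwich reduces to
`inf x̃ + inf (-φ) ≤ inf (x̃ - φ) ≤ sup |x̃| + inf (-φ)`, which holds pointwise before taking infima.
-/

open Set Filter

open Topology

theorem IsCompact.bddAbove_image_of_isBoundedUnder {X α : Type*} [TopologicalSpace X]
    [SemilatticeSup α] [Nonempty α] {K : Set X} {g : X → α} (hK : IsCompact K)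
    (hg : ∀ x ∈ K, (𝓝[K] x).IsBoundedUnder (· ≤ ·) g) : BddAbove (g '' K) := by
  refine hK.induction_on (p := fun s => BddAbove (g '' s)) (by simp)
    (fun s t hst ht => ht.mono (image_mono hst))
    (fun s t hs ht => by rw [image_union]; exact hs.union ht) fun x hx => ?_
  obtain ⟨b, hb⟩ := hg x hx
  exact ⟨{y | g y ≤ b}, hb, b, forall_mem_image.2 fun _ h => h⟩

namespace RCLL

variable {f g : ℝ → ℝ}

theorem neg (hf : RCLL f) : RCLL fun s => -f s :=
  ⟨fun t ht => (hf.1 t ht).neg, fun t ht =>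
    let ⟨l, hl⟩ := hf.2 t ht
    ⟨-l, hl.neg⟩⟩

theorem sub (hf : RCLL f) (hg : RCLL g) : RCLL fun s => f s - g s :=
  ⟨fun t ht => (hf.1 t ht).sub (hg.1 t ht), fun t ht =>
    let ⟨l, hl⟩ := hf.2 t ht
    let ⟨m, hm⟩ := hg.2 t ht
    ⟨l - m, hl.sub hm⟩⟩

theorem isBoundedUnder_abs {x : ℝ} (hf : RCLL f) (hx : 0 ≤ x) :
    (𝓝[Ici 0] x).IsBoundedUnder (· ≤ ·) fun s => |f s| := by
  have right : (𝓝[≥] x).IsBoundedUnder (· ≤ ·) fun s => |f s| :=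
    (hf.1 x hx).tendsto.abs.isBoundedUnder_le
  rcases hx.eq_or_lt with rfl | hx
  · exact right
  obtain ⟨l, hl⟩ := hf.2 x hx
  obtain ⟨a, ha⟩ := hl.abs.isBoundedUnder_le
  obtain ⟨b, hb⟩ := right
  rw [nhdsWithin_eq_nhds.2 (Ici_mem_nhds hx), ← nhdsLT_sup_nhdsGE]
  exact ⟨max a b, eventually_sup.2
    ⟨ha.mono fun _ h => le_max_of_le_left h, hb.mono fun _ h => le_max_of_le_right h⟩⟩

theorem bddAbove_abs_image_Icc (hf : RCLL f) (T : ℝ) :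
    BddAbove ((fun s => |f s|) '' Icc 0 T) :=
  isCompact_Icc.bddAbove_image_of_isBoundedUnder fun _ hx =>
    (hf.isBoundedUnder_abs hx.1).mono (nhdsWithin_mono _ Icc_subset_Ici_self)

theorem bddBelow_image_Icc (hf : RCLL f) (T : ℝ) : BddBelow (f '' Icc 0 T) := by
  obtain ⟨M, hM⟩ := hf.bddAbove_abs_image_Icc T
  exact ⟨-M, forall_mem_image.2 fun _ hs => neg_le_of_abs_le (hM (mem_image_of_mem _ hs))⟩

end RCLL

section Infima

variable {α : Type*} {S : Set α} {f g h : α → ℝ}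

theorem csInf_image_le_csSup_image_add_csInf_image (hS : S.Nonempty) (hh : BddBelow (h '' S))
    (hf : BddAbove (f '' S)) (hle : ∀ s ∈ S, h s ≤ f s + g s) :
    sInf (h '' S) ≤ sSup (f '' S) + sInf (g '' S) := by
  rw [← sub_le_iff_le_add']
  refine le_csInf (hS.image g) (forall_mem_image.2 fun s hs => ?_)
  have := csInf_le hh (mem_image_of_mem h hs)
  have := le_csSup hf (mem_image_of_mem f hs)
  linarith [hle s hs]

theorem csInf_image_add_csInf_image_le (hS : S.Nonempty) (hf : BddBelow (f '' S))
    (hg : BddBelow (g '' S)) (hle : ∀ s ∈ S, f s + g s ≤ h s) :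
    sInf (f '' S) + sInf (g '' S) ≤ sInf (h '' S) :=
  le_csInf (hS.image h) (forall_mem_image.2 fun s hs =>
    (add_le_add (csInf_le hf (mem_image_of_mem f hs)) (csInf_le hg (mem_image_of_mem g hs))).trans
      (hle s hs))

end Infima

theorem perturbed_reflection_sandwich_general
    (xt φ : ℝ → ℝ) (hxt : RCLL xt) (hφ : RCLL φ)
    (I W Wt : ℝ → ℝ)
    (hI : ∀ t : ℝ, I t = -sInf ((fun s => xt s - φ s) '' Set.Icc 0 t))
    (hW : ∀ t : ℝ, W t = xt t - φ t + I t)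
    (hWt : ∀ t : ℝ, Wt t = W t + φ t + sInf ((fun s => -φ s) '' Set.Icc 0 t)) :
    ∀ t : ℝ, 0 ≤ t →
      xt t - sSup ((fun s => |xt s|) '' Set.Icc 0 t) ≤ Wt t ∧
      Wt t ≤ skorohodMap xt t := by
  intro t ht
  have hS : (Icc (0 : ℝ) t).Nonempty := nonempty_Icc.2 ht
  have hWt_eq : Wt t = xt t - sInf ((fun s => xt s - φ s) '' Icc 0 t) +
      sInf ((fun s => -φ s) '' Icc 0 t) := by
    rw [hWt, hW, hI]; ring
  have lower := csInf_image_le_csSup_image_add_csInf_image (g := fun s => -φ s) hS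
    ((hxt.sub hφ).bddBelow_image_Icc t) (hxt.bddAbove_abs_image_Icc t)
    fun s _ => by linarith [le_abs_self (xt s)]
  have upper := csInf_image_add_csInf_image_le (h := fun s => xt s - φ s) hS
    (hxt.bddBelow_image_Icc t) (hφ.neg.bddBelow_image_Icc t) fun s _ => by linarith
  rw [hWt_eq, skorohodMap]
  constructor <;> linarith

/-- **Sandwich estimate for the perturbed reflected process** (eq. (5.32)).
With `I(t) = -inf_{0≤s≤t}(x̃(s) - φ(s))`, `W = x̃ - φ + I ≥ 0` and
`W̃(t) = W(t) + φ(t) + inf_{0≤s≤t}(-φ(s))`, one has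
`x̃(t) - sup_{0≤s≤t}|x̃(s)| ≤ W̃(t) ≤ Γ(x̃)(t)` for all `t ≥ 0`. -/
theorem perturbed_reflection_sandwich
    (xt φ : ℝ → ℝ) (hxt : RCLL xt) (hφ : RCLL φ)
    (h0 : 0 ≤ xt 0 + φ 0)
    (I W Wt : ℝ → ℝ)
    (hI : ∀ t : ℝ, I t = -sInf ((fun s => xt s - φ s) '' Set.Icc 0 t))
    (hW : ∀ t : ℝ, W t = xt t - φ t + I t)
    (hWnn : ∀ t : ℝ, 0 ≤ t → 0 ≤ W t)
    (hWt : ∀ t : ℝ, Wt t = W t + φ t + sInf ((fun s => -φ s) '' Set.Icc 0 t)) :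
    ∀ t : ℝ, 0 ≤ t →
      xt t - sSup ((fun s => |xt s|) '' Set.Icc 0 t) ≤ Wt t ∧
      Wt t ≤ skorohodMap xt t :=
  perturbed_reflection_sandwich_general xt φ hxt hφ I W Wt hI hW hWt
end
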